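/- arXiv:1705.01825 — 2 statements merged into one kernel-verified Lean document; each statement's English description precedes it below -/
import Mathlib

section
/- (Lemma A.1, limit as j → +∞) For every M > 0 there exists J > 0 such that for every j > J, every IVP solution m with parameter j that is defined on all of [0, ℓ] satisfies m(ℓ) < −M. -/
open Real Set

/-- The force profile `g(x) = ∫_{x-1}^x 1_{y ≤ ℓ/2} dy − ∫_x^{x+1} 1_{y ≤ ℓ/2} dy`. -/
noncomputable def gfun (ℓ : ℝ) (x : ℝ) : ℝ :=
  (∫ y in (x - 1)..x, if y ≤ ℓ / 2 then (1 : ℝ) else 0) -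
  (∫ y in x..(x + 1), if y ≤ ℓ / 2 then (1 : ℝ) else 0)

/-- An IVP solution with parameter `j`: a differentiable `m` on `[0, ℓ]` with `m 0 = 0`
and `m'(x) = -2j + βλ(1 - m(x)²) g(x)` on `[0, ℓ]`. -/
def IsIVPSolution (β lam ℓ j : ℝ) (m : ℝ → ℝ) : Prop :=
  m 0 = 0 ∧ ∀ x ∈ Icc (0 : ℝ) ℓ,
    HasDerivAt m (-2 * j + β * lam * (1 - m x ^ 2) * gfun ℓ x) x

/-- A stationary solution: an IVP solution which also satisfies `m ℓ = 0`. -/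
def IsStationarySolution (β lam ℓ j : ℝ) (m : ℝ → ℝ) : Prop :=
  IsIVPSolution β lam ℓ j m ∧ m ℓ = 0

open MeasureTheory in
lemma ivp_aux_intgr (c a b : ℝ) :
    IntervalIntegrable (fun y => if y ≤ c then (1:ℝ) else 0) volume a b := by
  apply intervalIntegrable_iff.mpr
  apply Measure.integrableOn_of_bounded (M := 1) (measure_Ioc_lt_top.ne)
    ((measurable_const.ite measurableSet_Iic measurable_const).aestronglyMeasurable)
  filter_upwards with y
  split <;> simp

open MeasureTheory in
lemma ivp_aux_gfun_nonneg (ℓ x : ℝ) : 0 ≤ gfun ℓ x := by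
  have h := intervalIntegral.integral_comp_add_right (a := x - 1) (b := x)
    (fun y => if y ≤ ℓ/2 then (1:ℝ) else 0) 1
  rw [show x - 1 + 1 = x by ring] at h
  rw [gfun, sub_nonneg, ← h]
  have hi : IntervalIntegrable (fun y => if y + 1 ≤ ℓ/2 then (1:ℝ) else 0) volume (x-1) x := by
    have := (ivp_aux_intgr (ℓ/2) x (x+1)).comp_add_right 1
    simpa using this
  apply intervalIntegral.integral_mono_on (by linarith) hi (ivp_aux_intgr (ℓ/2) _ _)
  intro y _
  by_cases h1 : y + 1 ≤ ℓ/2 <;> by_cases h2 : y ≤ ℓ/2 <;> simp [h1, h2] <;> linarith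

lemma ivp_aux_gfun_le_one (ℓ x : ℝ) : gfun ℓ x ≤ 1 := by
  have h1 : (∫ y in (x-1)..x, if y ≤ ℓ/2 then (1:ℝ) else 0) ≤ 1 := by
    calc (∫ y in (x-1)..x, if y ≤ ℓ/2 then (1:ℝ) else 0)
        ≤ ∫ _ in (x-1)..x, (1:ℝ) := by
          apply intervalIntegral.integral_mono_on (by linarith) (ivp_aux_intgr (ℓ/2) _ _)
            intervalIntegrable_const
          intro y _; split <;> simp
      _ = 1 := by simp
  have h2 : 0 ≤ ∫ y in x..(x+1), if y ≤ ℓ/2 then (1:ℝ) else 0 := by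
    apply intervalIntegral.integral_nonneg (by linarith)
    intro y; split <;> simp
  unfold gfun; linarith

/-- Lemma A.1 (limit as `j → +∞`). -/
theorem ivp_endpoint_to_bot (β lam ℓ : ℝ) (hβ : 0 < β) (hlam : 0 < lam) (hℓ : 2 < ℓ) :
    ∀ M > (0 : ℝ), ∃ J > (0 : ℝ), ∀ j > J, ∀ m : ℝ → ℝ,
      IsIVPSolution β lam ℓ j m → m ℓ < -M := by
  intro M hM
  have hℓ0 : (0:ℝ) < ℓ := by linarith
  refine ⟨(M / ℓ + β * lam) / 2, by positivity, ?_⟩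
  intro j hj m ⟨hm0, hderiv⟩
  set C : ℝ := -2 * j + β * lam with hC
  -- pointwise bound on the derivative
  have hbound : ∀ x, -2 * j + β * lam * (1 - m x ^ 2) * gfun ℓ x ≤ C := by
    intro x
    have hg0 := ivp_aux_gfun_nonneg ℓ x
    have hg1 := ivp_aux_gfun_le_one ℓ x
    have h1 : (1 - m x ^ 2) * gfun ℓ x ≤ 1 := by
      have hsq : (0:ℝ) ≤ m x ^ 2 := sq_nonneg _
      calc (1 - m x ^ 2) * gfun ℓ x ≤ 1 * gfun ℓ x := by
            apply mul_le_mul_of_nonneg_right (by linarith) hg0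
        _ ≤ 1 := by linarith
    have hbl : (0:ℝ) < β * lam := by positivity
    rw [hC]
    nlinarith
  -- h x = m x - C x is antitone on [0, ℓ]
  set h : ℝ → ℝ := fun x => m x - C * x with hh
  have hderivh : ∀ x ∈ Icc (0:ℝ) ℓ,
      HasDerivAt h (-2 * j + β * lam * (1 - m x ^ 2) * gfun ℓ x - C) x := by
    intro x hx
    exact (hderiv x hx).sub (by simpa using (hasDerivAt_id x).const_mul C)
  have hanti : AntitoneOn h (Icc 0 ℓ) := by
    apply antitoneOn_of_deriv_nonpos (convex_Icc 0 ℓ)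
    · exact fun x hx => (hderivh x hx).continuousAt.continuousWithinAt
    · intro x hx
      rw [interior_Icc] at hx
      exact (hderivh x (Ioo_subset_Icc_self hx)).differentiableAt.differentiableWithinAt
    · intro x hx
      rw [interior_Icc] at hx
      rw [(hderivh x (Ioo_subset_Icc_self hx)).deriv]
      have := hbound x
      linarith
  have key : h ℓ ≤ h 0 :=
    hanti (left_mem_Icc.mpr (le_of_lt hℓ0)) (right_mem_Icc.mpr (le_of_lt hℓ0)) (le_of_lt hℓ0)
  have h0 : h 0 = 0 := by simp [hh, hm0]
  have hml : m ℓ ≤ C * ℓ := by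
    have : m ℓ - C * ℓ ≤ 0 := by rw [← h0]; exact key
    linarith
  have hCl : C * ℓ < -M := by
    have hj' : 2 * j > M / ℓ + β * lam := by linarith
    have : C < -(M / ℓ) := by rw [hC]; linarith
    have h2 : C * ℓ < -(M / ℓ) * ℓ := by
      exact mul_lt_mul_of_pos_right this hℓ0
    rw [neg_mul, div_mul_cancel₀ _ (ne_of_gt hℓ0)] at h2
    exact h2
  linarith
end

section
/- (Theorem 3.1, equation (3.9.1): limiting current) For every ε > 0 there exists L > 4 such that for every ℓ > L and every stationary solution (j, m) on [0, ℓ], one has |ℓ j − tanh(βλ/2)| < ε. -/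
/-!
The force profile `gfun ℓ` is the tent `max 0 (1 - |x - ℓ / 2|)` of mass one, so off the bump
`[ℓ / 2 - 1, ℓ / 2 + 1]` a stationary solution is linear with slope `-2j`, and
`m ↦ -m (ℓ - ·)` maps stationary solutions to stationary solutions. Comparison arguments at the
levels `1/2` and `1` give `j > 0` and `|m| < 1`, so that `artanh ∘ m` has derivative
`βλ g - 2j / (1 - m²)`. The ends of the bump carry `m = ∓ j (ℓ - 2)`, hence integrating over it
gives `2 artanh (j (ℓ - 2)) = βλ - 2j ∫ (1 - m²)⁻¹`, where the integral is bounded independently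
of `ℓ` because `artanh ∘ m` stays in `[-2βλ, 2βλ]` on the bump. Thus
`j (ℓ - 2) = tanh (βλ / 2) + O(j)`, and `j (ℓ - 2) < 1` makes `ℓ j → tanh (βλ / 2)`.
-/

open Real Set

open MeasureTheory in
theorem integral_ite_le_eq_min_sub_min (a b c : ℝ) :
    ∫ y in a..b, (if y ≤ c then (1 : ℝ) else 0) = min b c - min a c := by
  wlog hab : a ≤ b generalizing a b
  · rw [intervalIntegral.integral_symm, this b a (le_of_not_ge hab), neg_sub]
  have hind : (fun y => if y ≤ c then (1 : ℝ) else 0) = (Iic c).indicator 1 := by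
    ext y; simp [indicator_apply]
  have hset : Ioc a b ∩ Iic c = Ioc a (min b c) := by
    ext y; simp only [mem_inter_iff, mem_Ioc, mem_Iic, le_min_iff]; tauto
  rw [hind, intervalIntegral.integral_of_le hab, setIntegral_indicator measurableSet_Iic, hset]
  simp only [Pi.one_apply, setIntegral_const, measureReal_def, Real.volume_Ioc, smul_eq_mul,
    mul_one, ENNReal.toReal_ofReal', min_def, max_def]
  split_ifs <;> linarith

theorem integral_tent (c : ℝ) : ∫ x in (c - 1)..(c + 1), max 0 (1 - |x - c|) = 1 := by
  rw [intervalIntegral.integral_comp_sub_right (fun x => max 0 (1 - |x|)), sub_sub_cancel_left,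
    add_sub_cancel_left, ← intervalIntegral.integral_add_adjacent_intervals (b := 0),
    intervalIntegral.integral_congr (g := fun x => 1 + x),
    intervalIntegral.integral_congr (a := 0) (g := fun x => 1 - x),
    intervalIntegral.integral_add intervalIntegrable_const intervalIntegral.intervalIntegrable_id,
    intervalIntegral.integral_sub intervalIntegrable_const intervalIntegral.intervalIntegrable_id]
  · norm_num [integral_id]
  · intro x hx
    rw [uIcc_of_le zero_le_one] at hx
    simp [abs_of_nonneg hx.1, hx.2]
  · intro x hx
    rw [uIcc_of_le (by norm_num)] at hx
    simp only [abs_of_nonpos hx.2, sub_neg_eq_add, max_eq_right (by linarith [hx.1] : 0 ≤ 1 + x)]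
  all_goals exact (by fun_prop : Continuous fun x : ℝ => max 0 (1 - |x|)).intervalIntegrable _ _

theorem gfun_eq_tent (ℓ x : ℝ) : gfun ℓ x = max 0 (1 - |x - ℓ / 2|) := by
  rw [gfun, integral_ite_le_eq_min_sub_min, integral_ite_le_eq_min_sub_min, abs_eq_max_neg]
  simp only [min_def, max_def]
  split_ifs <;> linarith

section gfun

variable (ℓ : ℝ)

theorem continuous_gfun : Continuous (gfun ℓ) := by
  rw [funext (gfun_eq_tent ℓ)]
  fun_prop

theorem gfun_nonneg (x : ℝ) : 0 ≤ gfun ℓ x := by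
  rw [gfun_eq_tent]; exact le_max_left _ _

theorem gfun_le_one (x : ℝ) : gfun ℓ x ≤ 1 := by
  rw [gfun_eq_tent]; exact max_le zero_le_one (by linarith [abs_nonneg (x - ℓ / 2)])

theorem gfun_pos {x : ℝ} (hx : x ∈ Ioo (ℓ / 2 - 1) (ℓ / 2 + 1)) : 0 < gfun ℓ x := by
  rw [gfun_eq_tent]
  have : |x - ℓ / 2| < 1 := abs_sub_lt_iff.2 ⟨by linarith [hx.2], by linarith [hx.1]⟩
  exact lt_max_of_lt_right (by linarith)

theorem gfun_eq_zero_of_le {x : ℝ} (hx : x ≤ ℓ / 2 - 1) : gfun ℓ x = 0 := by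
  rw [gfun_eq_tent, abs_of_nonpos (by linarith)]
  exact max_eq_left (by linarith)

theorem gfun_self_sub (x : ℝ) : gfun ℓ (ℓ - x) = gfun ℓ x := by
  rw [gfun_eq_tent, gfun_eq_tent, show ℓ - x - ℓ / 2 = -(x - ℓ / 2) by ring, abs_neg]

theorem integral_gfun : ∫ x in (ℓ / 2 - 1)..(ℓ / 2 + 1), gfun ℓ x = 1 := by
  simp only [gfun_eq_tent, integral_tent]

end gfun

theorem image_lt_of_deriv_neg_boundary {f f' : ℝ → ℝ} {a b c : ℝ}
    (hf : ∀ x ∈ Icc a b, HasDerivAt f (f' x) x) (ha : f a < c)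
    (bound : ∀ x ∈ Icc a b, f x = c → f' x < 0) : ∀ x ∈ Icc a b, f x < c := by
  have hle : ∀ x ∈ Icc a b, f x ≤ c :=
    image_le_of_deriv_right_lt_deriv_boundary (B := fun _ => c) (B' := 0)
      (fun x hx => (hf x hx).continuousAt.continuousWithinAt)
      (fun x hx => (hf x (Ico_subset_Icc_self hx)).hasDerivWithinAt) ha.le
      (fun _ => hasDerivAt_const _ c) (fun x hx => bound x (Ico_subset_Icc_self hx))
  intro x hx
  refine (hle x hx).lt_of_ne fun hfx => (bound x hx hfx).not_ge ?_
  have hax : a < x := hx.1.lt_of_ne (by rintro rfl; exact ha.ne hfx)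
  -- `x` is a maximum of `f` on `[a, x]`, so the left difference quotients are nonnegative
  refine ge_of_tendsto (hf x hx).tendsto_slope_zero_left ?_
  filter_upwards [Ioo_mem_nhdsLT (sub_neg.2 hax)] with t ht
  have hft : f (x + t) ≤ f x := hfx ▸ hle _ ⟨by linarith [ht.1], by linarith [ht.2, hx.2]⟩
  exact smul_nonneg_of_nonpos_of_nonpos (inv_nonpos.2 ht.2.le) (sub_nonpos.2 hft)

theorem hasDerivAt_artanh {x : ℝ} (hx : x ∈ Ioo (-1) 1) :
    HasDerivAt artanh (1 - x ^ 2)⁻¹ x := by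
  have h1 : 0 < 1 + x := by linarith [hx.1]
  have h2 : 0 < 1 - x := by linarith [hx.2]
  have hlog : HasDerivAt (fun y => 1 / 2 * log ((1 + y) / (1 - y)))
      (1 / 2 * ((1 * (1 - x) - (1 + x) * -1) / (1 - x) ^ 2 / ((1 + x) / (1 - x)))) x :=
    ((((hasDerivAt_id x).const_add 1).div ((hasDerivAt_id x).const_sub 1) h2.ne').log
      (div_pos h1 h2).ne').const_mul _
  refine (hlog.congr_of_eventuallyEq ?_).congr_deriv ?_
  · filter_upwards [Ioo_mem_nhds hx.1 hx.2] with y hy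
    exact artanh_eq_half_log (Ioo_subset_Icc_self hy)
  · have h3 : 1 - x ^ 2 ≠ 0 := by nlinarith
    field_simp
    ring

theorem artanh_neg_eq_neg_artanh (x : ℝ) : artanh (-x) = -artanh x := by
  rw [artanh, artanh, ← log_inv, ← sqrt_inv, inv_div, sub_neg_eq_add, ← sub_eq_add_neg]

theorem inv_one_sub_sq_eq_cosh_artanh_sq {x : ℝ} (hx : x ∈ Ioo (-1) 1) :
    (1 - x ^ 2)⁻¹ = cosh (artanh x) ^ 2 := by
  have : 0 ≤ 1 - x ^ 2 := by nlinarith [hx.1, hx.2]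
  rw [cosh_artanh hx, div_pow, sq_sqrt this, one_pow, one_div]

theorem sub_le_artanh_sub_artanh {x y : ℝ} (hx : -1 < x) (hy : y < 1) (hxy : x ≤ y) :
    y - x ≤ artanh y - artanh x := by
  have hmono : MonotoneOn (fun u => artanh u - u) (Ioo (-1) 1) := by
    refine monotoneOn_of_hasDerivWithinAt_nonneg (convex_Ioo _ _) (f' := fun u => (1 - u ^ 2)⁻¹ - 1)
      ?_ ?_ ?_
    · exact fun u hu =>
        ((hasDerivAt_artanh hu).sub (hasDerivAt_id u)).continuousAt.continuousWithinAt
    · rw [interior_Ioo]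
      exact fun u hu => ((hasDerivAt_artanh hu).sub (hasDerivAt_id u)).hasDerivWithinAt
    · rw [interior_Ioo]
      intro u hu
      have h0 : 0 < 1 - u ^ 2 := by nlinarith [hu.1, hu.2]
      have : 1 - u ^ 2 ≤ 1 := by nlinarith
      simp only [sub_nonneg]
      exact one_le_inv₀ h0 |>.mpr this
  have := hmono ⟨hx, hxy.trans_lt hy⟩ ⟨hx.trans_le hxy, hy⟩ hxy
  simp only at this
  linarith

theorem abs_sub_le_abs_artanh_sub {x y : ℝ} (hx : x ∈ Ioo (-1) 1) (hy : y ∈ Ioo (-1) 1) :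
    |x - y| ≤ |artanh x - artanh y| := by
  rcases le_total x y with h | h
  · rw [abs_sub_comm, abs_sub_comm (artanh x), abs_of_nonneg (sub_nonneg.2 h),
      abs_of_nonneg (sub_nonneg.2 ((artanh_le_artanh_iff hx hy).2 h))]
    exact sub_le_artanh_sub_artanh hx.1 hy.2 h
  · rw [abs_of_nonneg (sub_nonneg.2 h),
      abs_of_nonneg (sub_nonneg.2 ((artanh_le_artanh_iff hy hx).2 h))]
    exact sub_le_artanh_sub_artanh hy.1 hx.2 h

section StationarySolution

variable {β lam ℓ j : ℝ} {m : ℝ → ℝ}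

namespace IsIVPSolution

theorem continuousOn (hm : IsIVPSolution β lam ℓ j m) : ContinuousOn m (Icc 0 ℓ) :=
  fun x hx => (hm.2 x hx).continuousAt.continuousWithinAt

theorem eq_linear_left (hm : IsIVPSolution β lam ℓ j m) :
    ∀ x ∈ Icc 0 (ℓ / 2 - 1), m x = -2 * j * x := by
  have hsub : ∀ x ∈ Icc 0 (ℓ / 2 - 1), x ∈ Icc 0 ℓ := fun x hx => ⟨hx.1, by linarith [hx.1, hx.2]⟩
  refine eq_of_has_deriv_right_eq (f' := fun _ => -2 * j) (fun x hx => ?_) (fun x _ => ?_)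
    (hm.continuousOn.mono fun x hx => hsub x hx) (by fun_prop) (by simp [hm.1])
  · have hd := hm.2 x (hsub x (Ico_subset_Icc_self hx))
    rw [gfun_eq_zero_of_le ℓ hx.2.le, mul_zero, add_zero] at hd
    exact hd.hasDerivWithinAt
  · exact ((hasDerivAt_id x).const_mul (-2 * j)).hasDerivWithinAt.congr_deriv (mul_one _)

theorem lt_one (hm : IsIVPSolution β lam ℓ j m) (hj : 0 < j) : ∀ x ∈ Icc 0 ℓ, m x < 1 :=
  image_lt_of_deriv_neg_boundary hm.2 (by rw [hm.1]; exact zero_lt_one) fun x _ hx => by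
    rw [hx]; linarith

end IsIVPSolution

namespace IsStationarySolution

theorem reflect (hm : IsStationarySolution β lam ℓ j m) :
    IsStationarySolution β lam ℓ j (fun x => -m (ℓ - x)) := by
  refine ⟨⟨by simp [hm.2], fun x hx => ?_⟩, by simp [hm.1.1]⟩
  have hd := (hm.1.2 (ℓ - x) ⟨by linarith [hx.2], by linarith [hx.1]⟩).comp_const_sub ℓ x |>.fun_neg
  rw [gfun_self_sub, neg_neg, ← neg_sq] at hd
  exact hd

theorem eq_linear_right (hm : IsStationarySolution β lam ℓ j m) :
    ∀ x ∈ Icc (ℓ / 2 + 1) ℓ, m x = 2 * j * (ℓ - x) := by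
  intro x hx
  have := hm.reflect.1.eq_linear_left (ℓ - x) ⟨by linarith [hx.2], by linarith [hx.1]⟩
  rw [sub_sub_cancel] at this
  linarith

theorem mem_Ioo (hm : IsStationarySolution β lam ℓ j m) (hj : 0 < j) :
    ∀ x ∈ Icc 0 ℓ, m x ∈ Ioo (-1) 1 := by
  intro x hx
  have := hm.reflect.1.lt_one hj (ℓ - x) ⟨by linarith [hx.2], by linarith [hx.1]⟩
  rw [sub_sub_cancel] at this
  exact ⟨by linarith, hm.1.lt_one hj x hx⟩

theorem lt_one_on_bump_of_current_nonpos (hm : IsStationarySolution β lam ℓ j m) (hκ : 0 < β * lam)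
    (hℓ : 2 ≤ ℓ) (hj : j ≤ 0) : ∀ x ∈ Ioo (ℓ / 2 - 1) (ℓ / 2 + 1), m x < 1 := by
  intro ξ hξ
  by_contra! hξ1
  have hb : m (ℓ / 2 + 1) ≤ 0 := by
    rw [hm.eq_linear_right _ ⟨le_rfl, by linarith⟩]
    exact mul_nonpos_of_nonpos_of_nonneg (by linarith) (by linarith)
  -- once `m` has reached `1` in the bump it cannot descend through `1/2` before the bump ends
  have := image_lt_of_deriv_neg_boundary (f := fun x => -m x) (c := -1 / 2)
    (fun x hx => (hm.1.2 x ⟨by linarith [hξ.1, hx.1], by linarith [hx.2]⟩).neg)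
    (by linarith) (fun x hx hmx => ?_) (ℓ / 2 + 1) ⟨hξ.2.le, le_rfl⟩
  · linarith
  · have hxb : x < ℓ / 2 + 1 := hx.2.lt_of_ne (by rintro rfl; linarith)
    have hg := gfun_pos ℓ ⟨hξ.1.trans_le hx.1, hxb⟩
    have : m x = 1 / 2 := by linarith
    rw [this]
    nlinarith [mul_pos hκ hg]

theorem current_pos (hm : IsStationarySolution β lam ℓ j m) (hκ : 0 < β * lam) (hℓ : 2 ≤ ℓ) :
    0 < j := by
  by_contra! hj
  -- mean value theorem on the bump: `m' ξ = 2 j (ℓ / 2 - 1) ≤ 0`, which forces `|m ξ| ≥ 1`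
  obtain ⟨ξ, hξ, hslope⟩ := exists_hasDerivAt_eq_slope m _ (by linarith : ℓ / 2 - 1 < ℓ / 2 + 1)
    (hm.1.continuousOn.mono (Icc_subset_Icc (by linarith) (by linarith)))
    (fun x hx => hm.1.2 x ⟨by linarith [hx.1], by linarith [hx.2]⟩)
  rw [hm.1.eq_linear_left _ ⟨by linarith, le_rfl⟩, hm.eq_linear_right _ ⟨le_rfl, by linarith⟩]
    at hslope
  have hlt := hm.lt_one_on_bump_of_current_nonpos hκ hℓ hj ξ hξ
  have hgt := hm.reflect.lt_one_on_bump_of_current_nonpos hκ hℓ hj (ℓ - ξ)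
    ⟨by linarith [hξ.2], by linarith [hξ.1]⟩
  rw [sub_sub_cancel] at hgt
  have hpos : 0 < β * lam * (1 - m ξ ^ 2) * gfun ℓ ξ :=
    mul_pos (mul_pos hκ (by nlinarith)) (gfun_pos ℓ hξ)
  field_simp at hslope
  nlinarith

theorem hasDerivAt_artanh_comp (hm : IsStationarySolution β lam ℓ j m) (hj : 0 < j) :
    ∀ x ∈ Icc 0 ℓ, HasDerivAt (fun y => artanh (m y))
      (β * lam * gfun ℓ x - 2 * j * (1 - m x ^ 2)⁻¹) x := by
  intro x hx
  have hmx := hm.mem_Ioo hj x hx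
  have hne : 1 - m x ^ 2 ≠ 0 := by nlinarith [hmx.1, hmx.2]
  refine ((hasDerivAt_artanh hmx).comp x (hm.1.2 x hx)).congr_deriv ?_
  field_simp
  ring

theorem abs_artanh_le_on_bump (hm : IsStationarySolution β lam ℓ j m) (hκ : 0 < β * lam)
    (hℓ : 2 ≤ ℓ) (hj : 0 < j) :
    ∀ x ∈ Icc (ℓ / 2 - 1) (ℓ / 2 + 1), |artanh (m x)| ≤ 2 * (β * lam) := by
  have hsub : Icc (ℓ / 2 - 1) (ℓ / 2 + 1) ⊆ Icc 0 ℓ := Icc_subset_Icc (by linarith) (by linarith)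
  have hd := fun x hx => hm.hasDerivAt_artanh_comp hj x (hsub hx)
  have hgrowth := (convex_Icc (ℓ / 2 - 1) (ℓ / 2 + 1)).image_sub_le_mul_sub_of_deriv_le
    (fun x hx => (hd x hx).continuousAt.continuousWithinAt)
    (fun x hx => (hd x (interior_subset hx)).differentiableAt.differentiableWithinAt)
    (C := β * lam) fun x hx => by
      have hx' := interior_subset hx
      have hmx := hm.mem_Ioo hj x (hsub hx')
      have : 0 ≤ 2 * j * (1 - m x ^ 2)⁻¹ :=
        mul_nonneg (by linarith) (inv_nonneg.2 (by nlinarith [hmx.1, hmx.2]))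
      rw [(hd x hx').deriv]
      nlinarith [gfun_le_one ℓ x]
  have ha : artanh (m (ℓ / 2 - 1)) ≤ 0 := by
    rw [hm.1.eq_linear_left _ ⟨by linarith, le_rfl⟩]
    exact artanh_nonpos (by nlinarith)
  have hb : 0 ≤ artanh (m (ℓ / 2 + 1)) := by
    rw [hm.eq_linear_right _ ⟨le_rfl, by linarith⟩]
    exact artanh_nonneg (by nlinarith)
  intro x hx
  have h1 := hgrowth _ ⟨le_rfl, by linarith⟩ x hx hx.1
  have h2 := hgrowth x hx _ ⟨by linarith, le_rfl⟩ hx.2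
  rw [abs_le]
  constructor <;> nlinarith [hx.1, hx.2]

open MeasureTheory in
theorem abs_artanh_sub_le (hm : IsStationarySolution β lam ℓ j m) (hκ : 0 < β * lam)
    (hℓ : 2 ≤ ℓ) (hj : 0 < j) :
    |artanh (j * (ℓ - 2)) - β * lam / 2| ≤ 2 * j * cosh (2 * (β * lam)) ^ 2 := by
  set K := cosh (2 * (β * lam)) ^ 2
  have hsub : Icc (ℓ / 2 - 1) (ℓ / 2 + 1) ⊆ Icc 0 ℓ := Icc_subset_Icc (by linarith) (by linarith)
  have hd := fun x hx => hm.hasDerivAt_artanh_comp hj x (hsub hx)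
  have hcont : ContinuousOn (fun y => artanh (m y)) (Icc (ℓ / 2 - 1) (ℓ / 2 + 1)) :=
    fun x hx => (hd x hx).continuousAt.continuousWithinAt
  have hd' := fun x (hx : x ∈ Ioo (ℓ / 2 - 1) (ℓ / 2 + 1)) =>
    (hd x (Ioo_subset_Icc_self hx)).hasDerivWithinAt (s := Ioi x)
  have hw : ∀ x ∈ Ioo (ℓ / 2 - 1) (ℓ / 2 + 1), 0 < (1 - m x ^ 2)⁻¹ ∧ (1 - m x ^ 2)⁻¹ ≤ K := by
    intro x hx
    have hmx := hm.mem_Ioo hj x (hsub (Ioo_subset_Icc_self hx))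
    refine ⟨inv_pos.2 (by nlinarith [hmx.1, hmx.2]), ?_⟩
    rw [inv_one_sub_sq_eq_cosh_artanh_sq hmx]
    refine pow_le_pow_left₀ (cosh_pos _).le ?_ 2
    rw [cosh_le_cosh, abs_of_pos (by linarith : 0 < 2 * (β * lam))]
    exact hm.abs_artanh_le_on_bump hκ hℓ hj x (Ioo_subset_Icc_self hx)
  have hupper := intervalIntegral.sub_le_integral_of_hasDeriv_right_of_le (by linarith) hcont hd'
    ((continuous_gfun ℓ).const_mul (β * lam)).integrableOn_Icc fun x hx => by nlinarith [hw x hx]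
  have hlower := intervalIntegral.integral_le_sub_of_hasDeriv_right_of_le (by linarith) hcont hd'
    (φ := fun x => β * lam * gfun ℓ x - 2 * j * K)
    (((continuous_gfun ℓ).const_mul _).sub continuous_const).integrableOn_Icc
    fun x hx => by nlinarith [hw x hx]
  rw [intervalIntegral.integral_const_mul, integral_gfun] at hupper
  rw [intervalIntegral.integral_sub ((continuous_gfun ℓ).intervalIntegrable _ _ |>.const_mul _)
    intervalIntegrable_const, intervalIntegral.integral_const_mul, integral_gfun,
    intervalIntegral.integral_const, smul_eq_mul] at hlower
  rw [hm.1.eq_linear_left _ ⟨by linarith, le_rfl⟩, hm.eq_linear_right _ ⟨le_rfl, by linarith⟩,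
    show -2 * j * (ℓ / 2 - 1) = -(j * (ℓ - 2)) by ring,
    show 2 * j * (ℓ - (ℓ / 2 + 1)) = j * (ℓ - 2) by ring,
    artanh_neg_eq_neg_artanh] at hupper hlower
  have hK : 0 ≤ 2 * j * K := by positivity
  rw [abs_le]
  constructor <;> linarith

theorem abs_mul_current_sub_tanh_le
    (hm : IsStationarySolution β lam ℓ j m) (hκ : 0 < β * lam) (hℓ : 2 < ℓ) :
    |ℓ * j - tanh (β * lam / 2)| ≤ 2 * (cosh (2 * (β * lam)) ^ 2 + 1) / (ℓ - 2) := by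
  have hj := hm.current_pos hκ hℓ.le
  have hs : j * (ℓ - 2) ∈ Ioo (-1) 1 := by
    have := hm.mem_Ioo hj (ℓ / 2 + 1) ⟨by linarith, by linarith⟩
    rwa [hm.eq_linear_right _ ⟨le_rfl, by linarith⟩,
      show 2 * j * (ℓ - (ℓ / 2 + 1)) = j * (ℓ - 2) by ring] at this
  have hclose : |j * (ℓ - 2) - tanh (β * lam / 2)| ≤ 2 * j * cosh (2 * (β * lam)) ^ 2 := by
    have := abs_sub_le_abs_artanh_sub hs ⟨neg_one_lt_tanh (β * lam / 2), tanh_lt_one _⟩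
    rw [artanh_tanh] at this
    exact this.trans (hm.abs_artanh_sub_le hκ hℓ.le hj)
  rw [le_div_iff₀ (by linarith)]
  calc |ℓ * j - tanh (β * lam / 2)| * (ℓ - 2)
      = |(j * (ℓ - 2) - tanh (β * lam / 2)) + 2 * j| * (ℓ - 2) := by ring_nf
    _ ≤ (2 * j * cosh (2 * (β * lam)) ^ 2 + 2 * j) * (ℓ - 2) := by
      gcongr
      exact (abs_add_le _ _).trans (add_le_add hclose (abs_of_pos (by linarith)).le)
    _ = 2 * (cosh (2 * (β * lam)) ^ 2 + 1) * (j * (ℓ - 2)) := by ring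
    _ ≤ 2 * (cosh (2 * (β * lam)) ^ 2 + 1) := mul_le_of_le_one_right (by positivity) hs.2.le

end IsStationarySolution

end StationarySolution

/-- Theorem 3.1, (3.9.1): `l · j^{(l)} → tanh(βλ/2)` as `l → ∞`. -/
theorem stationary_current_limit (β lam : ℝ) (hβ : 0 < β) (hlam : 0 < lam) :
    ∀ ε > (0 : ℝ), ∃ L > (4 : ℝ), ∀ ℓ > L,
      ∀ j : ℝ, ∀ m : ℝ → ℝ, IsStationarySolution β lam ℓ j m →
        |ℓ * j - Real.tanh (β * lam / 2)| < ε := by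
  intro ε hε
  have hκ : 0 < β * lam := mul_pos hβ hlam
  set C := 2 * (cosh (2 * (β * lam)) ^ 2 + 1)
  have hC : 0 < C / ε := by positivity
  refine ⟨4 + C / ε, by linarith, fun ℓ hℓ j m hm => ?_⟩
  calc |ℓ * j - tanh (β * lam / 2)| ≤ C / (ℓ - 2) := hm.abs_mul_current_sub_tanh_le hκ (by linarith)
    _ < ε := by
      rw [div_lt_iff₀ (by linarith), ← div_lt_iff₀' hε]
      linarith
end
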